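/- arXiv:1504.01656 — 4 statements merged into one kernel-verified Lean document; each statement's English description precedes it below -/
import Mathlib

section
/- Let ρ be a partial assignment fixing exactly ℓ variables and let A be the unique clause of width ℓ falsified by ρ (containing, for each variable fixed by ρ, the literal falsified by ρ). If a clause C has a resolution derivation of width w and size s from the restricted formula F|ρ, then the clause A ∨ C has a resolution derivation of width at most w + ℓ and size at most s + 1 from F. -/
/-- A clause is a finite set of literals; a literal is a pair (variable, polarity),
where polarity `true` means a positive literal. -/
abbrev Clause (V : Type) [DecidableEq V] := Finset (V × Bool)

/-- One step of a resolution derivation from `F`: the clause `C` is an axiom of `F`,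
a weakening of an earlier clause, or the resolvent `A ∪ B` of earlier clauses
`A ∨ x` and `B ∨ ¬x`. -/
def ResStep {V : Type} [DecidableEq V] (F : Set (Clause V)) (prev : List (Clause V))
    (C : Clause V) : Prop :=
  C ∈ F ∨ (∃ D ∈ prev, D ⊆ C) ∨
    (∃ (A B : Clause V) (x : V),
      insert (x, true) A ∈ prev ∧ insert (x, false) B ∈ prev ∧ C = A ∪ B)

/-- `L` is a resolution derivation from `F`: every clause follows from the preceding ones. -/
def IsResDerivation {V : Type} [DecidableEq V] (F : Set (Clause V))
    (L : List (Clause V)) : Prop :=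
  ∀ i : Fin L.length, ResStep F (L.take i.1) (L.get i)

/-- `F` derives clause `C` by a resolution derivation of size at most `s` and width at
most `w`. -/
def DerivesIn {V : Type} [DecidableEq V] (F : Set (Clause V)) (C : Clause V)
    (s w : ℕ) : Prop :=
  ∃ L : List (Clause V), IsResDerivation F L ∧ C ∈ L ∧ L.length ≤ s ∧
    ∀ D ∈ L, D.card ≤ w

/-- The restriction `F|ρ` of a formula by a partial assignment `ρ`: clauses containing a
literal satisfied by `ρ` are removed, and falsified literals are deleted from the
remaining clauses. -/
def restrictFormula {V : Type} [DecidableEq V] (F : Set (Clause V))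
    (ρ : V → Option Bool) : Set (Clause V) :=
  {C' | ∃ C ∈ F, (∀ l ∈ C, ρ l.1 ≠ some l.2) ∧
    C' = C.filter (fun l => ρ l.1 ≠ some (!l.2))}

/-! Every clause `D` of a derivation from `F|ρ` is shadowed, step by step, by a clause
`D' ⊆ A ∪ D` derivable from `F`. An axiom `C|ρ` lifts to `C`, because the literals `ρ` deletes
from `C` are exactly those in `A`; a weakening lifts to a repetition of the lifted premise; a
resolution on `x` lifts to the resolvent of the lifted premises if both still contain their pivot
literal, and otherwise to a repetition of the one that lost it. The shadow derivation has the same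
size and width at most `w + |A| = w + ℓ`, and one final weakening produces `A ∪ C`. -/

theorem List.Forall₂.exists_mem_left_of_mem_right {α β : Type*} {R : α → β → Prop}
    {l₁ : List α} {l₂ : List β} (h : List.Forall₂ R l₁ l₂) {b : β} (hb : b ∈ l₂) :
    ∃ a ∈ l₁, R a b := by
  induction h with
  | nil => simp at hb
  | cons hab _ ih =>
    rcases List.mem_cons.mp hb with rfl | hb
    · exact ⟨_, List.mem_cons_self, hab⟩
    · obtain ⟨a, ha, hR⟩ := ih hb
      exact ⟨a, List.mem_cons_of_mem _ ha, hR⟩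

theorem List.Forall₂.exists_mem_right_of_mem_left {α β : Type*} {R : α → β → Prop}
    {l₁ : List α} {l₂ : List β} (h : List.Forall₂ R l₁ l₂) {a : α} (ha : a ∈ l₁) :
    ∃ b ∈ l₂, R a b :=
  h.flip.exists_mem_left_of_mem_right ha

section Resolution

variable {V : Type} [DecidableEq V]

lemma isResDerivation_iff {F : Set (Clause V)} {L : List (Clause V)} :
    IsResDerivation F L ↔ ∀ (i : ℕ) (hi : i < L.length), ResStep F (L.take i) L[i] :=
  ⟨fun h i hi => h ⟨i, hi⟩, fun h i => h i.1 i.2⟩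

lemma isResDerivation_nil (F : Set (Clause V)) : IsResDerivation F [] :=
  fun i => i.elim0

lemma isResDerivation_append_singleton_iff {F : Set (Clause V)} {L : List (Clause V)}
    {E : Clause V} :
    IsResDerivation F (L ++ [E]) ↔ IsResDerivation F L ∧ ResStep F L E := by
  simp only [isResDerivation_iff, List.length_append, List.length_singleton]
  constructor
  · intro h
    refine ⟨fun i hi => ?_, by simpa using h L.length (by omega)⟩
    simpa [List.take_append_of_le_length hi.le, List.getElem_append_left hi] using h i (by omega)
  · rintro ⟨hL, hE⟩ i hi
    rcases Nat.lt_succ_iff_lt_or_eq.mp hi with hi | rfl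
    · simpa [List.take_append_of_le_length hi.le, List.getElem_append_left hi] using hL i hi
    · simpa using hE

lemma resStep_of_subset {F : Set (Clause V)} {prev : List (Clause V)} {D C : Clause V}
    (hD : D ∈ prev) (hDC : D ⊆ C) : ResStep F prev C :=
  Or.inr (Or.inl ⟨D, hD, hDC⟩)

lemma exists_resStep_subset_resolvent {F : Set (Clause V)} {prev : List (Clause V)}
    {E₁ E₂ A B : Clause V} {x : V} (h₁ : E₁ ∈ prev) (h₂ : E₂ ∈ prev)
    (hE₁ : E₁ ⊆ insert (x, true) A) (hE₂ : E₂ ⊆ insert (x, false) B) :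
    ∃ E, ResStep F prev E ∧ E ⊆ A ∪ B := by
  by_cases hx₁ : (x, true) ∈ E₁
  swap
  · exact ⟨E₁, resStep_of_subset h₁ subset_rfl,
      ((Finset.subset_insert_iff_of_notMem hx₁).mp hE₁).trans Finset.subset_union_left⟩
  by_cases hx₂ : (x, false) ∈ E₂
  swap
  · exact ⟨E₂, resStep_of_subset h₂ subset_rfl,
      ((Finset.subset_insert_iff_of_notMem hx₂).mp hE₂).trans Finset.subset_union_right⟩
  refine ⟨E₁.erase (x, true) ∪ E₂.erase (x, false), Or.inr (Or.inr ⟨_, _, x, ?_, ?_, rfl⟩),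
    Finset.union_subset_union (Finset.subset_insert_iff.mp hE₁) (Finset.subset_insert_iff.mp hE₂)⟩
  · rwa [Finset.insert_erase hx₁]
  · rwa [Finset.insert_erase hx₂]

section Restriction

variable {ρ : V → Option Bool} {A : Clause V}

lemma subset_union_filter_restrict (hA : ∀ l : V × Bool, l ∈ A ↔ ρ l.1 = some (!l.2))
    (C : Clause V) : C ⊆ A ∪ C.filter (fun l => ρ l.1 ≠ some (!l.2)) := by
  intro l hl
  by_cases h : ρ l.1 = some (!l.2)
  · exact Finset.mem_union_left _ ((hA l).mpr h)
  · exact Finset.mem_union_right _ (Finset.mem_filter.mpr ⟨hl, h⟩)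

lemma exists_resStep_subset_union_of_resStep_restrict {F : Set (Clause V)}
    (hA : ∀ l : V × Bool, l ∈ A ↔ ρ l.1 = some (!l.2)) {L L' : List (Clause V)}
    (hlift : ∀ D ∈ L, ∃ D' ∈ L', D' ⊆ A ∪ D) {D : Clause V}
    (hD : ResStep (restrictFormula F ρ) L D) : ∃ E, ResStep F L' E ∧ E ⊆ A ∪ D := by
  rcases hD with ⟨C, hC, -, rfl⟩ | ⟨D₀, hD₀, hD₀D⟩ | ⟨A₀, B₀, x, h₁, h₂, rfl⟩
  · exact ⟨C, Or.inl hC, subset_union_filter_restrict hA C⟩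
  · obtain ⟨E, hE, hED₀⟩ := hlift D₀ hD₀
    exact ⟨E, resStep_of_subset hE subset_rfl, hED₀.trans (Finset.union_subset_union_right hD₀D)⟩
  · obtain ⟨E₁, hE₁, hE₁A₀⟩ := hlift _ h₁
    obtain ⟨E₂, hE₂, hE₂B₀⟩ := hlift _ h₂
    rw [Finset.union_insert] at hE₁A₀ hE₂B₀
    obtain ⟨E, hE, hEsub⟩ := exists_resStep_subset_resolvent hE₁ hE₂ hE₁A₀ hE₂B₀
    exact ⟨E, hE, hEsub.trans (Finset.union_union_distrib_left A A₀ B₀).ge⟩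

lemma exists_isResDerivation_subset_union {F : Set (Clause V)}
    (hA : ∀ l : V × Bool, l ∈ A ↔ ρ l.1 = some (!l.2)) {L : List (Clause V)}
    (hL : IsResDerivation (restrictFormula F ρ) L) :
    ∃ L', IsResDerivation F L' ∧ List.Forall₂ (fun D' D => D' ⊆ A ∪ D) L' L := by
  induction L using List.reverseRecOn with
  | nil => exact ⟨[], isResDerivation_nil F, .nil⟩
  | append_singleton L D ih =>
    obtain ⟨hL, hD⟩ := isResDerivation_append_singleton_iff.mp hL
    obtain ⟨L', hL', hlift⟩ := ih hL
    obtain ⟨E, hE, hED⟩ := exists_resStep_subset_union_of_resStep_restrict hA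
      (fun _ h => hlift.exists_mem_left_of_mem_right h) hD
    exact ⟨L' ++ [E], isResDerivation_append_singleton_iff.mpr ⟨hL', hE⟩,
      List.rel_append hlift (.cons hED .nil)⟩

lemma card_eq_card_filter_isSome [Fintype V]
    (hA : ∀ l : V × Bool, l ∈ A ↔ ρ l.1 = some (!l.2)) :
    A.card = (Finset.univ.filter (fun v : V => (ρ v).isSome)).card := by
  refine Finset.card_bij (fun l _ => l.1) (fun l hl => ?_) (fun l₁ h₁ l₂ h₂ hv => ?_)
    (fun v hv => ?_)
  · simp [(hA l).mp hl]
  · have h := (hA l₁).mp h₁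
    rw [hv, (hA l₂).mp h₂] at h
    exact Prod.ext hv (by simpa using h.symm)
  · obtain ⟨b, hb⟩ := Option.isSome_iff_exists.mp (Finset.mem_filter.mp hv).2
    exact ⟨(v, !b), (hA _).mpr (by simp [hb]), rfl⟩

end Restriction

end Resolution

/-- If `ρ` fixes exactly `ℓ` variables, `A` is the unique width-`ℓ` clause falsified by `ρ`
(containing, for each fixed variable, the literal falsified by `ρ`), and `C` has a
resolution derivation of size `s` and width `w` from `F|ρ`, then `A ∨ C` has a resolution
derivation of size at most `s + 1` and width at most `w + ℓ` from `F`. -/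
theorem derivation_from_restriction {V : Type} [DecidableEq V] [Fintype V]
    (F : Set (Clause V)) (ρ : V → Option Bool) (ℓ : ℕ)
    (hρ : (Finset.univ.filter (fun v : V => (ρ v).isSome)).card = ℓ)
    (A : Clause V) (hA : ∀ l : V × Bool, l ∈ A ↔ ρ l.1 = some (!l.2))
    (C : Clause V) (s w : ℕ)
    (h : DerivesIn (restrictFormula F ρ) C s w) :
    DerivesIn F (A ∪ C) (s + 1) (w + ℓ) := by
  obtain ⟨L, hL, hC, hlen, hwidth⟩ := h
  obtain ⟨L', hL', hlift⟩ := exists_isResDerivation_subset_union hA hL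
  obtain ⟨E, hE, hEC⟩ := hlift.exists_mem_left_of_mem_right hC
  have hcardA : A.card = ℓ := (card_eq_card_filter_isSome hA).trans hρ
  have hwidth_union : ∀ D ∈ L, (A ∪ D).card ≤ w + ℓ := fun D hD =>
    (Finset.card_union_le _ _).trans (by have := hwidth D hD; omega)
  refine ⟨L' ++ [A ∪ C], isResDerivation_append_singleton_iff.mpr
    ⟨hL', resStep_of_subset hE hEC⟩, by simp, ?_, fun D hD => ?_⟩
  · simp [hlift.length_eq, hlen]
  rcases List.mem_append.mp hD with hD | hD
  · obtain ⟨D₀, hD₀, hDD₀⟩ := hlift.exists_mem_right_of_mem_left hD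
    exact (Finset.card_le_card hDD₀).trans (hwidth_union D₀ hD₀)
  · rw [List.mem_singleton.mp hD]
    exact hwidth_union C hC
end

section
/- The CNF formula in the previous clause family (with clauses y_{i,0}; ¬y_{i,j-1} ∨ x_{i,j} ∨ y_{i,j}; ¬y_{i,m_i}; and ¬x_{1,j_1} ∨ ... ∨ ¬x_{k,j_k} for all tuples) is unsatisfiable. -/
/-- The CNF formula with clauses `y_{i,0}`; `¬y_{i,j-1} ∨ x_{i,j} ∨ y_{i,j}` for
`i ∈ [k], j ∈ [m_i]`; `¬y_{i,m_i}`; and `¬x_{1,j_1} ∨ ⋯ ∨ ¬x_{k,j_k}` for every tuple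
`(j_1,…,j_k) ∈ [m_1] × ⋯ × [m_k]`, is unsatisfiable: no 0/1-assignment satisfies all
its clauses. -/
theorem bfFormula_unsatisfiable (k : ℕ) (hk : 0 < k) (m : Fin k → ℕ)
    (hm : ∀ i, 0 < m i) :
    ¬ ∃ (x y : Fin k → ℕ → Bool),
        (∀ i, y i 0 = true) ∧
        (∀ (i : Fin k) (j : ℕ), 1 ≤ j → j ≤ m i →
          (y i (j - 1) = false ∨ x i j = true ∨ y i j = true)) ∧
        (∀ i, y i (m i) = false) ∧
        (∀ J : Fin k → ℕ, (∀ i, 1 ≤ J i ∧ J i ≤ m i) → ∃ i, x i (J i) = false) := by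
  rintro ⟨x, y, h0, hstep, hend, hbig⟩
  have key : ∀ i : Fin k, ∃ j, 1 ≤ j ∧ j ≤ m i ∧ x i j = true := by
    intro i
    have hex : ∃ j, y i j = false := ⟨m i, hend i⟩
    set j := Nat.find hex with hj
    have hjf : y i j = false := Nat.find_spec hex
    have hj1 : 1 ≤ j := by
      rcases Nat.eq_zero_or_pos j with h | h
      · rw [h] at hjf; rw [h0 i] at hjf; simp at hjf
      · exact h
    have hjm : j ≤ m i := Nat.find_le (hend i)
    have hprev : y i (j - 1) = true := by
      by_contra h
      have : y i (j - 1) = false := by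
        cases hb : y i (j - 1) with
        | false => rfl
        | true => exact absurd hb h
      have hle : Nat.find hex ≤ j - 1 := Nat.find_le this
      omega
    rcases hstep i j hj1 hjm with h | h | h
    · rw [hprev] at h; simp at h
    · exact ⟨j, hj1, hjm, h⟩
    · rw [hjf] at h; simp at h
  choose J hJ1 hJ2 hJ3 using key
  obtain ⟨i, hi⟩ := hbig J (fun i => ⟨hJ1 i, hJ2 i⟩)
  rw [hJ3 i] at hi; simp at hi
end

section
/- Let G be a k-partite graph with parts V_1,...,V_k. If the CNF formula Clique_k(G) has a sums-of-squares refutation of domain-degree d (where the domain is the index set [k] of the clique positions), then the polynomial system Block_k(G) has a sums-of-squares refutation of domain-degree d. -/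
open MvPolynomial

/-- The domain-degree of a polynomial: the maximum, over its monomials, of the number of
distinct domain indices mentioned by the variables of the monomial. -/
def domDeg {σ D : Type*} [DecidableEq D] (idx : σ → D) (p : MvPolynomial σ ℝ) : ℕ :=
  p.support.sup fun m => (m.support.image idx).card

/-- A polynomial expressible as a sum of squares. -/
def IsSOS {σ : Type*} (u : MvPolynomial σ ℝ) : Prop :=
  ∃ qs : List (MvPolynomial σ ℝ), u = (qs.map (· ^ 2)).sum

/-- The ideal generated by `x^2 - x` for every variable (the multilinear setting). -/
noncomputable def multilinIdeal (σ : Type*) : Ideal (MvPolynomial σ ℝ) :=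
  Ideal.span {q | ∃ s : σ, q = X s ^ 2 - X s}

/-- The system `eqs = 0`, `ineqs ≥ 0` has a sums-of-squares refutation of domain-degree at
most `d`: an identity `-1 = Σ g_j f_j + Σ u_j h_j + u_0` in the multilinear ring, with
each `u_j` and `u_0` a sum of squares and every summand of domain-degree at most `d`. -/
def HasSOSRefutationDomDeg {σ D : Type*} [DecidableEq D] (idx : σ → D)
    (eqs ineqs : Set (MvPolynomial σ ℝ)) (d : ℕ) : Prop :=
  ∃ (fs hs : List (MvPolynomial σ ℝ × MvPolynomial σ ℝ)) (u0 : MvPolynomial σ ℝ),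
    (∀ q ∈ fs, q.1 ∈ eqs) ∧ (∀ q ∈ hs, q.1 ∈ ineqs) ∧
    (∀ q ∈ hs, IsSOS q.2) ∧ IsSOS u0 ∧
    (∀ q ∈ fs, domDeg idx (q.2 * q.1) ≤ d) ∧
    (∀ q ∈ hs, domDeg idx (q.2 * q.1) ≤ d) ∧
    domDeg idx u0 ≤ d ∧
    (-1 : MvPolynomial σ ℝ) -
        ((fs.map fun q => q.2 * q.1).sum + (hs.map fun q => q.2 * q.1).sum + u0)
      ∈ multilinIdeal σ

/-- Vertices of a `k`-partite graph: part `i` is `{i} × Fin (n i)`. -/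
abbrev Vtx (k : ℕ) (n : Fin k → ℕ) := Σ i : Fin k, Fin (n i)

/-- Variables of `Clique_k(G)`: `Sum.inl (i, v)` is `x_{i,v}`, `Sum.inr (i, j)` is `z_{i,j}`. -/
abbrev CliqueVar (k : ℕ) (n : Fin k → ℕ) (N : ℕ) := (Fin k × Vtx k n) ⊕ (Fin k × Fin (N + 1))

/-- The domain index (in `[k]`, the set of clique positions) mentioned by a variable. -/
def cliqueIdx {k : ℕ} {n : Fin k → ℕ} {N : ℕ} : CliqueVar k n N → Fin k
  | Sum.inl (i, _) => i
  | Sum.inr (i, _) => i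

/-- The polynomial encoding `L(C) - 1 ≥ 0` of the clauses of `Clique_k(G)`, with vertex
enumeration `e : Fin N ≃ Vtx k n`. -/
def cliqueIneqs (k : ℕ) (n : Fin k → ℕ) (N : ℕ) (G : SimpleGraph (Vtx k n))
    (e : Fin N ≃ Vtx k n) : Set (MvPolynomial (CliqueVar k n N) ℝ) :=
  {p | ∃ (i i' : Fin k) (u v : Vtx k n), i ≠ i' ∧ ¬ G.Adj u v ∧
        p = 1 - X (Sum.inl (i, u)) - X (Sum.inl (i', v))} ∪
  {p | ∃ (i : Fin k) (u v : Vtx k n), u ≠ v ∧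
        p = 1 - X (Sum.inl (i, u)) - X (Sum.inl (i, v))} ∪
  {p | ∃ i : Fin k, p = X (Sum.inr (i, (0 : Fin (N + 1)))) - 1} ∪
  {p | ∃ (i : Fin k) (j : Fin N),
        p = ((1 - X (Sum.inr (i, j.castSucc))) + X (Sum.inl (i, e j))
              + X (Sum.inr (i, j.succ))) - 1} ∪
  {p | ∃ i : Fin k, p = (1 - X (Sum.inr (i, Fin.last N))) - 1}

/-- The equations `Σ_{v ∈ V_i} x_v = 1` of `Block_k(G)`. -/
def blockEqs (k : ℕ) (n : Fin k → ℕ) : Set (MvPolynomial (Vtx k n) ℝ) :=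
  {p | ∃ i : Fin k, p = (∑ w : Fin (n i), X (⟨i, w⟩ : Vtx k n)) - 1}

/-- The inequalities `x_u + x_v ≤ 1`, i.e. `1 - x_u - x_v ≥ 0`, for non-edges across
distinct blocks. -/
def blockIneqs (k : ℕ) (n : Fin k → ℕ) (G : SimpleGraph (Vtx k n)) :
    Set (MvPolynomial (Vtx k n) ℝ) :=
  {p | ∃ u v : Vtx k n, u.1 ≠ v.1 ∧ ¬ G.Adj u v ∧ p = 1 - X u - X v}


/-!
The reduction substitutes `x_{i,v} ↦ x_v` for `v ∈ V_i` (and `0` otherwise) and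
`z_{i,j} ↦ 1 - ∏ (1 - x_{e t})`, the product over `t ≥ j` with `e t ∈ V_i`. Every variable of
position `i` goes to a polynomial in the block-`i` variables, so domain-degree cannot grow, and
every image is idempotent modulo `x² = x`, so the multilinear ideal is mapped into itself.

Modulo `x² = x`, each clause `h` with its SOS multiplier `u` then becomes a block inequality
term, a square, or `u` times a polynomial in block `i` that is rewritten as a multiple of
`Σ_{v ∈ V_i} x_v - 1` plus a sum of squares. The rewriting multiplies `u` by block-`i`
polynomials, which stays within domain-degree `d` because `h` is non-constant in the
position-`i` variables: the product of lex-maximal monomials shows that every monomial of `u`,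
together with the index `i`, already occurs in a monomial of `u * h`.
-/

section DomainDegree

variable {σ D : Type*} [DecidableEq D] (f : σ → D)

def domDegWith (i : D) (p : MvPolynomial σ ℝ) : ℕ :=
  p.support.sup fun m => (insert i (m.support.image f)).card

variable {f}

theorem domDeg_add_le (p q : MvPolynomial σ ℝ) :
    domDeg f (p + q) ≤ max (domDeg f p) (domDeg f q) := by
  classical
  exact (Finset.sup_mono (support_add (p := p) (q := q))).trans_eq Finset.sup_union

@[simp]
theorem domDegWith_neg (i : D) (p : MvPolynomial σ ℝ) :
    domDegWith f i (-p) = domDegWith f i p := by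
  simp [domDegWith]

theorem support_subset_of_mem_supported {R : Type*} [CommSemiring R] {s : Set σ}
    {p : MvPolynomial σ R} (hp : p ∈ supported R s) {m : σ →₀ ℕ} (hm : m ∈ p.support) :
    ↑m.support ⊆ s := fun x hx =>
  mem_supported.mp hp (Finset.mem_coe.mpr (mem_vars_iff_mem_support x |>.mpr ⟨m, hm, hx⟩))

theorem domDeg_mul_le_domDegWith {i : D} {v r : MvPolynomial σ ℝ}
    (hr : r ∈ supported ℝ (f ⁻¹' {i})) : domDeg f (v * r) ≤ domDegWith f i v := by
  classical
  refine Finset.sup_le fun μ hμ => ?_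
  obtain ⟨a, ha, b, hb, rfl⟩ := Finset.mem_add.mp (support_mul v r hμ)
  refine (Finset.card_le_card ?_).trans
    (Finset.le_sup (f := fun m => (insert i (m.support.image f)).card) ha)
  intro y hy
  obtain ⟨x, hx, rfl⟩ := Finset.mem_image.mp hy
  rcases Finset.mem_union.mp (Finsupp.support_add hx) with hxa | hxb
  · exact Finset.mem_insert_of_mem (Finset.mem_image_of_mem f hxa)
  · rw [support_subset_of_mem_supported hr hb hxb]
    exact Finset.mem_insert_self _ _

theorem exists_mem_support_mul_of_mem_supported {R : Type*} [CommSemiring R]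
    [NoZeroDivisors R] {P : Set σ} {u h : MvPolynomial σ R} (hh : h ∈ supported R P)
    (hc : ∃ ν ∈ h.support, ν ≠ 0) {m : σ →₀ ℕ} (hm : m ∈ u.support) :
    ∃ μ ∈ (u * h).support, (∀ x ∉ P, μ x = m x) ∧ ∃ x ∈ P, μ x ≠ 0 := by
  classical
  let _ : LinearOrder σ := IsWellOrder.linearOrder WellOrderingRel
  have hoff : ∀ β ∈ h.support, ∀ x ∉ P, β x = 0 := fun β hβ x hx =>
    Finsupp.notMem_support_iff.mp fun hxβ => hx (support_subset_of_mem_supported hh hβ hxβ)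
  -- `α₀ + β₀` arises only from the pair `(α₀, β₀)`: `α₀` is lex-maximal among the
  -- monomials of `u` agreeing with `m` off `P`, and `β₀` is lex-maximal in `h`.
  set A := u.support.filter fun α => ∀ x ∉ P, α x = m x
  obtain ⟨α₀, hα₀, hα₀max⟩ := A.exists_max_image toLex ⟨m, by simp [A, hm]⟩
  obtain ⟨ν, hν, hν0⟩ := hc
  obtain ⟨β₀, hβ₀, hβ₀max⟩ := h.support.exists_max_image toLex ⟨ν, hν⟩
  rw [Finset.mem_filter] at hα₀
  refine ⟨α₀ + β₀, ?_, fun x hx => by simp [hoff β₀ hβ₀ x hx, hα₀.2 x hx], ?_⟩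
  · rw [mem_support_iff, coeff_mul, Finset.sum_eq_single (α₀, β₀)]
    · exact mul_ne_zero (mem_support_iff.mp hα₀.1) (mem_support_iff.mp hβ₀)
    · rintro ⟨α, β⟩ hαβ hne
      rw [Finset.HasAntidiagonal.mem_antidiagonal] at hαβ
      by_contra hprod
      have hα := mem_support_iff.mpr (left_ne_zero_of_mul hprod)
      have hβ := mem_support_iff.mpr (right_ne_zero_of_mul hprod)
      have hαA : α ∈ A := Finset.mem_filter.mpr ⟨hα, fun x hx => by
        simpa [hoff β hβ x hx, hoff β₀ hβ₀ x hx, hα₀.2 x hx] using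
          congrArg (· x) hαβ⟩
      rcases (hα₀max α hαA).lt_or_eq with hlt | heq
      · have := add_lt_add_of_lt_of_le hlt (hβ₀max β hβ)
        rw [← toLex_add, ← toLex_add, hαβ] at this
        exact this.false
      · have hαeq : α = α₀ := toLex.injective heq
        subst hαeq
        exact hne (Prod.ext rfl (add_left_cancel hαβ))
    · simp
  · have hβ₀0 : β₀ ≠ 0 := by
      rintro rfl
      exact hν0 (toLex.injective (le_antisymm (hβ₀max ν hν) bot_le))
    obtain ⟨x, hx⟩ := Finsupp.support_nonempty_iff.mpr hβ₀0
    refine ⟨x, support_subset_of_mem_supported hh hβ₀ hx, ?_⟩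
    rw [Finsupp.add_apply]
    exact fun h0 => Finsupp.mem_support_iff.mp hx (Nat.eq_zero_of_add_eq_zero_left h0 ▸ rfl)

theorem domDegWith_le_domDeg_mul {i : D} {u h : MvPolynomial σ ℝ}
    (hh : h ∈ supported ℝ (f ⁻¹' {i})) (hc : ∃ ν ∈ h.support, ν ≠ 0) :
    domDegWith f i u ≤ domDeg f (u * h) := by
  classical
  refine Finset.sup_le fun m hm => ?_
  obtain ⟨μ, hμ, hμm, x, hxi, hx⟩ := exists_mem_support_mul_of_mem_supported hh hc hm
  refine (Finset.card_le_card ?_).trans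
    (Finset.le_sup (f := fun m => (m.support.image f).card) hμ)
  intro y hy
  have hxμ : i ∈ μ.support.image f :=
    Finset.mem_image.mpr ⟨x, Finsupp.mem_support_iff.mpr hx, hxi⟩
  rcases Finset.mem_insert.mp hy with rfl | hy
  · exact hxμ
  obtain ⟨z, hz, rfl⟩ := Finset.mem_image.mp hy
  by_cases hzi : f z = i
  · rwa [hzi]
  · refine Finset.mem_image_of_mem f (Finsupp.mem_support_iff.mpr ?_)
    rw [hμm z hzi]
    exact Finsupp.mem_support_iff.mp hz

end DomainDegree

theorem isSOS_iff_isSumSq {σ : Type*} {u : MvPolynomial σ ℝ} : IsSOS u ↔ IsSumSq u := by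
  constructor
  · rintro ⟨qs, rfl⟩
    induction qs with
    | nil => exact IsSumSq.zero
    | cons q qs ih => simpa [sq] using IsSumSq.sq_add q ih
  · intro h
    induction h with
    | zero => exact ⟨[], by simp⟩
    | sq_add q _ ih =>
      obtain ⟨qs, rfl⟩ := ih
      exact ⟨q :: qs, by simp [sq]⟩

theorem IsSumSq.map {R S F : Type*} [NonAssocSemiring R] [NonAssocSemiring S] [FunLike F R S]
    [RingHomClass F R S] (φ : F) {s : R} (hs : IsSumSq s) : IsSumSq (φ s) := by
  induction hs with
  | zero => simp [IsSumSq.zero]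
  | sq_add a _ ih => simpa using IsSumSq.sq_add (φ a) ih

section Certificate

variable {σ D : Type*} [DecidableEq D] (idx : σ → D) (eqs ineqs : Set (MvPolynomial σ ℝ))
  (d : ℕ)

def sosCertified : AddSubmonoid (MvPolynomial σ ℝ) where
  carrier := {A | ∃ (fs hs : List (MvPolynomial σ ℝ × MvPolynomial σ ℝ))
    (u0 : MvPolynomial σ ℝ),
    (∀ q ∈ fs, q.1 ∈ eqs) ∧ (∀ q ∈ hs, q.1 ∈ ineqs) ∧
    (∀ q ∈ hs, IsSOS q.2) ∧ IsSOS u0 ∧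
    (∀ q ∈ fs, domDeg idx (q.2 * q.1) ≤ d) ∧
    (∀ q ∈ hs, domDeg idx (q.2 * q.1) ≤ d) ∧
    domDeg idx u0 ≤ d ∧
    A - ((fs.map fun q => q.2 * q.1).sum + (hs.map fun q => q.2 * q.1).sum + u0)
      ∈ multilinIdeal σ}
  zero_mem' := ⟨[], [], 0, by simp, by simp, by simp, ⟨[], rfl⟩, by simp, by simp,
    by simp [domDeg], by simp⟩
  add_mem' := by
    rintro A B ⟨fs, hs, u0, hfs, hhs, hsos, hu0, hdfs, hdhs, hdu0, hA⟩
      ⟨fs', hs', u0', hfs', hhs', hsos', hu0', hdfs', hdhs', hdu0', hB⟩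
    refine ⟨fs ++ fs', hs ++ hs', u0 + u0', List.forall_mem_append.mpr ⟨hfs, hfs'⟩,
      List.forall_mem_append.mpr ⟨hhs, hhs'⟩, List.forall_mem_append.mpr ⟨hsos, hsos'⟩,
      isSOS_iff_isSumSq.mpr ((isSOS_iff_isSumSq.mp hu0).add (isSOS_iff_isSumSq.mp hu0')),
      List.forall_mem_append.mpr ⟨hdfs, hdfs'⟩, List.forall_mem_append.mpr ⟨hdhs, hdhs'⟩,
      (domDeg_add_le u0 u0').trans (max_le hdu0 hdu0'), ?_⟩
    convert add_mem hA hB using 1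
    simp only [List.map_append, List.sum_append]
    ring

theorem hasSOSRefutationDomDeg_iff :
    HasSOSRefutationDomDeg idx eqs ineqs d ↔ -1 ∈ sosCertified idx eqs ineqs d :=
  Iff.rfl

variable {idx eqs ineqs d}

theorem mem_sosCertified_of_sub_mem {A B : MvPolynomial σ ℝ}
    (hA : A ∈ sosCertified idx eqs ineqs d) (hBA : B - A ∈ multilinIdeal σ) :
    B ∈ sosCertified idx eqs ineqs d := by
  obtain ⟨fs, hs, u0, hfs, hhs, hsos, hu0, hdfs, hdhs, hdu0, hA⟩ := hA
  refine ⟨fs, hs, u0, hfs, hhs, hsos, hu0, hdfs, hdhs, hdu0, ?_⟩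
  convert add_mem hBA hA using 1
  ring

theorem mul_mem_sosCertified_of_mem_eqs {f g : MvPolynomial σ ℝ} (hf : f ∈ eqs)
    (hd : domDeg idx (g * f) ≤ d) : g * f ∈ sosCertified idx eqs ineqs d :=
  ⟨[(f, g)], [], 0, by simpa using hf, by simp, by simp, ⟨[], rfl⟩, by simpa using hd,
    by simp, by simp [domDeg], by simp⟩

theorem mul_mem_sosCertified_of_mem_ineqs {h u : MvPolynomial σ ℝ} (hh : h ∈ ineqs)
    (hu : IsSumSq u) (hd : domDeg idx (u * h) ≤ d) : u * h ∈ sosCertified idx eqs ineqs d :=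
  ⟨[], [(h, u)], 0, by simp, by simpa using hh, by simpa using isSOS_iff_isSumSq.mpr hu,
    ⟨[], rfl⟩, by simp, by simpa using hd, by simp [domDeg], by simp⟩

theorem mem_sosCertified_of_isSumSq {u : MvPolynomial σ ℝ} (hu : IsSumSq u)
    (hd : domDeg idx u ≤ d) : u ∈ sosCertified idx eqs ineqs d :=
  ⟨[], [], u, by simp, by simp, by simp, isSOS_iff_isSumSq.mpr hu, by simp, by simp, hd,
    by simp⟩

theorem mul_mem_sosCertified_of_isIdempotentElem {v q : MvPolynomial σ ℝ} {i : D}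
    (hv : IsSumSq v) (hq : q ∈ supported ℝ (idx ⁻¹' {i}))
    (hqq : IsIdempotentElem (Ideal.Quotient.mk (multilinIdeal σ) q))
    (hd : domDegWith idx i v ≤ d) : v * q ∈ sosCertified idx eqs ineqs d := by
  refine mem_sosCertified_of_sub_mem (mem_sosCertified_of_isSumSq (hv.mul (.mul_self q))
    ((domDeg_mul_le_domDegWith (mul_mem hq hq)).trans hd)) ?_
  have hqq' : q * q - q ∈ multilinIdeal σ := Ideal.Quotient.eq.mp (by rw [map_mul]; exact hqq)
  convert Ideal.mul_mem_left _ (-v) hqq' using 1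
  ring

theorem HasSOSRefutationDomDeg.map {τ E : Type*} [DecidableEq E] {idx' : τ → E}
    {eqs' ineqs' : Set (MvPolynomial τ ℝ)} {d' : ℕ} {F : Type*}
    [FunLike F (MvPolynomial σ ℝ) (MvPolynomial τ ℝ)]
    [RingHomClass F (MvPolynomial σ ℝ) (MvPolynomial τ ℝ)] (φ : F)
    (hφ : multilinIdeal σ ≤ (multilinIdeal τ).comap φ)
    (heqs : ∀ f ∈ eqs, ∀ g, domDeg idx (g * f) ≤ d →
      φ (g * f) ∈ sosCertified idx' eqs' ineqs' d')
    (hineqs : ∀ h ∈ ineqs, ∀ u, IsSOS u → domDeg idx (u * h) ≤ d →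
      φ (u * h) ∈ sosCertified idx' eqs' ineqs' d')
    (hsos : ∀ u, IsSOS u → domDeg idx u ≤ d → φ u ∈ sosCertified idx' eqs' ineqs' d')
    (h : HasSOSRefutationDomDeg idx eqs ineqs d) :
    HasSOSRefutationDomDeg idx' eqs' ineqs' d' := by
  obtain ⟨fs, hs, u0, hfs, hhs, hsos', hu0, hdfs, hdhs, hdu0, hml⟩ := h
  have himage := hφ hml
  rw [Ideal.mem_comap, map_sub, map_neg, map_one] at himage
  refine (hasSOSRefutationDomDeg_iff _ _ _ _).mpr (mem_sosCertified_of_sub_mem ?_ himage)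
  rw [map_add, map_add, map_list_sum, map_list_sum, List.map_map, List.map_map]
  refine add_mem (add_mem (list_sum_mem ?_) (list_sum_mem ?_)) (hsos u0 hu0 hdu0)
  · intro _ hx
    obtain ⟨q, hq, rfl⟩ := List.mem_map.mp hx
    exact heqs q.1 (hfs q hq) q.2 (hdfs q hq)
  · intro _ hx
    obtain ⟨q, hq, rfl⟩ := List.mem_map.mp hx
    exact hineqs q.1 (hhs q hq) q.2 (hsos' q hq) (hdhs q hq)

end Certificate

theorem isIdempotentElem_mk_X {σ : Type*} (s : σ) :
    IsIdempotentElem (Ideal.Quotient.mk (multilinIdeal σ) (X s)) := by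
  rw [IsIdempotentElem, ← map_mul, Ideal.Quotient.eq]
  exact Ideal.subset_span ⟨s, by rw [sq]⟩

section Substitution

variable {σ τ D : Type*} [DecidableEq D] {f : σ → D} {g : τ → D}
  {sub : σ → MvPolynomial τ ℝ}

theorem multilinIdeal_le_comap_aeval
    (hsub : ∀ s, IsIdempotentElem (Ideal.Quotient.mk (multilinIdeal τ) (sub s))) :
    multilinIdeal σ ≤ (multilinIdeal τ).comap (aeval sub) := by
  refine Ideal.span_le.mpr ?_
  rintro _ ⟨s, rfl⟩
  rw [SetLike.mem_coe, Ideal.mem_comap, map_sub, map_pow, aeval_X, ← Ideal.Quotient.eq, map_pow,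
    sq]
  exact hsub s

theorem exists_image_support_subset_of_mem_support_aeval
    (hsub : ∀ s, sub s ∈ supported ℝ (g ⁻¹' {f s})) {p : MvPolynomial σ ℝ}
    {μ : τ →₀ ℕ} (hμ : μ ∈ (aeval sub p).support) :
    ∃ m ∈ p.support, μ.support.image g ⊆ m.support.image f := by
  classical
  rw [p.as_sum, map_sum] at hμ
  obtain ⟨m, hm, hμm⟩ := Finset.mem_biUnion.mp (support_sum hμ)
  have hmem : aeval sub (monomial m (coeff m p)) ∈ supported ℝ (g ⁻¹' (f '' m.support)) := by
    rw [aeval_monomial, Finsupp.prod]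
    refine Subalgebra.mul_mem _ (Subalgebra.algebraMap_mem _ _)
      (Subalgebra.prod_mem _ fun s hs => Subalgebra.pow_mem _ (supported_mono ?_ (hsub s)) _)
    exact Set.preimage_mono (Set.singleton_subset_iff.mpr (Set.mem_image_of_mem f hs))
  refine ⟨m, hm, fun y hy => ?_⟩
  obtain ⟨x, hx, rfl⟩ := Finset.mem_image.mp hy
  obtain ⟨z, hz, hfz⟩ := support_subset_of_mem_supported hmem hμm hx
  exact Finset.mem_image.mpr ⟨z, hz, hfz⟩

theorem domDeg_aeval_le (hsub : ∀ s, sub s ∈ supported ℝ (g ⁻¹' {f s}))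
    (p : MvPolynomial σ ℝ) : domDeg g (aeval sub p) ≤ domDeg f p :=
  Finset.sup_le fun _ hμ =>
    have ⟨_, hm, himage⟩ := exists_image_support_subset_of_mem_support_aeval hsub hμ
    (Finset.card_le_card himage).trans
      (Finset.le_sup (f := fun m => (m.support.image f).card) hm)

theorem domDegWith_aeval_le (hsub : ∀ s, sub s ∈ supported ℝ (g ⁻¹' {f s})) (i : D)
    (p : MvPolynomial σ ℝ) :
    domDegWith g i (aeval sub p) ≤ domDegWith f i p :=
  Finset.sup_le fun _ hμ =>
    have ⟨_, hm, himage⟩ := exists_image_support_subset_of_mem_support_aeval hsub hμ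
    (Finset.card_le_card (Finset.insert_subset_insert i himage)).trans
      (Finset.le_sup (f := fun m => (insert i (m.support.image f)).card) hm)

end Substitution

section CliqueToBlock

variable {k : ℕ} {n : Fin k → ℕ} {N : ℕ}

noncomputable def vertexSubst (i : Fin k) (v : Vtx k n) : MvPolynomial (Vtx k n) ℝ :=
  if v.1 = i then X v else 0

theorem vertexSubst_mem_supported (i : Fin k) (v : Vtx k n) :
    vertexSubst i v ∈ supported ℝ (Sigma.fst ⁻¹' {i}) := by
  unfold vertexSubst
  split_ifs with hv
  · exact X_mem_supported.mpr hv
  · exact zero_mem _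

theorem isIdempotentElem_mk_vertexSubst (i : Fin k) (v : Vtx k n) :
    IsIdempotentElem (Ideal.Quotient.mk (multilinIdeal (Vtx k n)) (vertexSubst i v)) := by
  unfold vertexSubst
  split_ifs
  · exact isIdempotentElem_mk_X v
  · simpa using IsIdempotentElem.zero

variable (e : Fin N ≃ Vtx k n)

noncomputable def tailProd (i : Fin k) (j : ℕ) : MvPolynomial (Vtx k n) ℝ :=
  ∏ t : Fin N with j ≤ t.val, (1 - vertexSubst i (e t))

-- `z_{i,j}` goes to the Boolean "or" of the block-`i` variables `x_{e t}`, `t ≥ j`, not to the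
-- paper's sum of them, which is not idempotent modulo `x² = x`.
noncomputable def cliqueSubst : CliqueVar k n N → MvPolynomial (Vtx k n) ℝ
  | Sum.inl (i, v) => vertexSubst i v
  | Sum.inr (i, j) => 1 - tailProd e i j

theorem tailProd_mem_supported (i : Fin k) (j : ℕ) :
    tailProd e i j ∈ supported ℝ (Sigma.fst ⁻¹' {i}) :=
  Subalgebra.prod_mem _ fun _ _ => sub_mem (one_mem _) (vertexSubst_mem_supported _ _)

theorem isIdempotentElem_mk_tailProd (i : Fin k) (j : ℕ) :
    IsIdempotentElem (Ideal.Quotient.mk (multilinIdeal (Vtx k n)) (tailProd e i j)) := by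
  rw [tailProd, map_prod]
  refine Finset.prod_induction _ _ (fun _ _ => IsIdempotentElem.mul) IsIdempotentElem.one
    fun t _ => ?_
  rw [map_sub, map_one]
  exact (isIdempotentElem_mk_vertexSubst i (e t)).one_sub

theorem tailProd_of_le (i : Fin k) {j : ℕ} (hj : N ≤ j) : tailProd e i j = 1 :=
  Finset.prod_eq_one fun t ht => absurd (Finset.mem_filter.mp ht).2 (by omega)

theorem tailProd_eq_mul_succ (i : Fin k) (j : Fin N) :
    tailProd e i j = (1 - vertexSubst i (e j)) * tailProd e i (j + 1) := by
  rw [tailProd, tailProd,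
    ← Finset.prod_insert (f := fun t => 1 - vertexSubst i (e t)) (by simp)]
  congr 1
  ext t
  simp only [Finset.mem_filter, Finset.mem_univ, true_and, Finset.mem_insert, Fin.ext_iff]
  omega

theorem tailProd_zero_mul_X_mem {i : Fin k} {v : Vtx k n} (hv : v.1 = i) :
    tailProd e i 0 * X v ∈ multilinIdeal (Vtx k n) := by
  rw [tailProd, ← Finset.mul_prod_erase _ _ (a := e.symm v) (by simp), e.apply_symm_apply,
    vertexSubst, if_pos hv, ← Ideal.Quotient.eq_zero_iff_mem, map_mul, map_mul, mul_right_comm,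
    map_sub, map_one, (isIdempotentElem_mk_X v).one_sub_mul_self, zero_mul]

theorem cliqueSubst_mem_supported (s : CliqueVar k n N) :
    cliqueSubst e s ∈ supported ℝ (Sigma.fst ⁻¹' {cliqueIdx s}) :=
  match s with
  | Sum.inl (i, v) => vertexSubst_mem_supported i v
  | Sum.inr (i, j) => sub_mem (one_mem _) (tailProd_mem_supported e i j)

theorem isIdempotentElem_mk_cliqueSubst (s : CliqueVar k n N) :
    IsIdempotentElem (Ideal.Quotient.mk (multilinIdeal (Vtx k n)) (cliqueSubst e s)) :=
  match s with
  | Sum.inl (i, v) => isIdempotentElem_mk_vertexSubst i v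
  | Sum.inr (i, j) => by
    rw [cliqueSubst, map_sub, map_one]
    exact (isIdempotentElem_mk_tailProd e i j).one_sub

end CliqueToBlock

section Clauses

variable {k : ℕ} {n : Fin k → ℕ} {N : ℕ} {G : SimpleGraph (Vtx k n)} {d : ℕ}

local notation "𝓑" =>
  sosCertified (Sigma.fst : Vtx k n → Fin k) (blockEqs k n) (blockIneqs k n G) d

theorem mul_one_sub_sum_mem_sosCertified {i : Fin k} (T : Finset (Fin (n i)))
    {v : MvPolynomial (Vtx k n) ℝ} (hv : IsSumSq v) (hd : domDegWith Sigma.fst i v ≤ d) :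
    v * (1 - ∑ w ∈ T, X (⟨i, w⟩ : Vtx k n)) ∈ 𝓑 := by
  have hX : ∀ w, X (⟨i, w⟩ : Vtx k n) ∈ supported ℝ (Sigma.fst ⁻¹' {i}) := fun w =>
    X_mem_supported.mpr rfl
  have hblock : -v * (∑ w : Fin (n i), X (⟨i, w⟩ : Vtx k n) - 1) ∈ 𝓑 :=
    mul_mem_sosCertified_of_mem_eqs ⟨i, rfl⟩ <| (domDeg_mul_le_domDegWith
      (sub_mem (sum_mem fun w _ => hX w) (one_mem _))).trans (by simpa using hd)
  have hsquares : v * ∑ w ∈ Tᶜ, X (⟨i, w⟩ : Vtx k n) ^ 2 ∈ 𝓑 :=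
    mem_sosCertified_of_isSumSq (hv.mul (IsSumSq.sum_sq _ _))
      ((domDeg_mul_le_domDegWith (sum_mem fun w _ => pow_mem (hX w) 2)).trans hd)
  refine mem_sosCertified_of_sub_mem (add_mem hblock hsquares) ?_
  have hidem :
      ∑ w ∈ Tᶜ, (X (⟨i, w⟩ : Vtx k n) ^ 2 - X ⟨i, w⟩) ∈ multilinIdeal (Vtx k n) :=
    sum_mem fun w _ => Ideal.subset_span ⟨⟨i, w⟩, rfl⟩
  convert Ideal.mul_mem_left _ (-v) hidem using 1
  rw [← Finset.sum_add_sum_compl T, Finset.sum_sub_distrib]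
  ring

theorem mul_one_sub_sum_mem_sosCertified_of_domDeg_le {i : Fin k} {T : Finset (Fin (n i))}
    (hT : T.Nonempty) {v : MvPolynomial (Vtx k n) ℝ} (hv : IsSumSq v)
    (hd : domDeg Sigma.fst (v * (1 - ∑ w ∈ T, X (⟨i, w⟩ : Vtx k n))) ≤ d) :
    v * (1 - ∑ w ∈ T, X (⟨i, w⟩ : Vtx k n)) ∈ 𝓑 := by
  obtain ⟨w₀, hw₀⟩ := hT
  refine mul_one_sub_sum_mem_sosCertified T hv ((domDegWith_le_domDeg_mul ?_ ?_).trans hd)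
  · exact sub_mem (one_mem _) (sum_mem fun w _ => X_mem_supported.mpr rfl)
  · refine ⟨Finsupp.single ⟨i, w₀⟩ 1, ?_, by simp⟩
    simp [coeff_sum, coeff_X, coeff_one, Finsupp.single_left_inj, hw₀,
      eq_comm (a := (0 : Vtx k n →₀ ℕ))]

theorem mul_one_sub_X_mem_sosCertified {v : MvPolynomial (Vtx k n) ℝ} (hv : IsSumSq v)
    {u : Vtx k n} (hd : domDeg Sigma.fst (v * (1 - X u)) ≤ d) : v * (1 - X u) ∈ 𝓑 := by
  simpa using mul_one_sub_sum_mem_sosCertified_of_domDeg_le (T := {u.2})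
    (Finset.singleton_nonempty _) hv (by simpa using hd)

theorem mul_one_sub_X_sub_X_mem_sosCertified {v : MvPolynomial (Vtx k n) ℝ} (hv : IsSumSq v)
    {i : Fin k} {a b : Fin (n i)} (hab : a ≠ b)
    (hd : domDeg Sigma.fst (v * (1 - X ⟨i, a⟩ - X ⟨i, b⟩)) ≤ d) :
    v * (1 - X ⟨i, a⟩ - X ⟨i, b⟩) ∈ 𝓑 := by
  rw [sub_sub, ← Finset.sum_pair (f := fun w => X (⟨i, w⟩ : Vtx k n)) hab] at hd ⊢
  exact mul_one_sub_sum_mem_sosCertified_of_domDeg_le (Finset.insert_nonempty _ _) hv hd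

theorem mul_one_sub_vertexSubst_sub_mem_sosCertified {v : MvPolynomial (Vtx k n) ℝ}
    (hv : IsSumSq v) {i i' : Fin k} {u u' : Vtx k n}
    (hd : domDeg Sigma.fst (v * (1 - vertexSubst i u - vertexSubst i' u')) ≤ d)
    (hboth : u.1 = i → u'.1 = i' → domDeg Sigma.fst (v * (1 - X u - X u')) ≤ d →
      v * (1 - X u - X u') ∈ 𝓑) :
    v * (1 - vertexSubst i u - vertexSubst i' u') ∈ 𝓑 := by
  unfold vertexSubst at hd ⊢
  split_ifs at hd ⊢ with hu hu'
  · exact hboth hu hu' hd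
  · rw [sub_zero] at hd ⊢
    exact mul_one_sub_X_mem_sosCertified hv hd
  · rw [sub_zero] at hd ⊢
    exact mul_one_sub_X_mem_sosCertified hv hd
  · rw [sub_zero, sub_zero, mul_one] at hd ⊢
    exact mem_sosCertified_of_isSumSq hv hd

variable (e : Fin N ≃ Vtx k n)

theorem domDegWith_aeval_le_of_domDeg_mul_le {i : Fin k}
    {u h : MvPolynomial (CliqueVar k n N) ℝ} (hh : h ∈ supported ℝ (cliqueIdx ⁻¹' {i}))
    (hc : ∃ ν ∈ h.support, ν ≠ 0)
    (hd : domDeg cliqueIdx (u * h) ≤ d) :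
    domDegWith Sigma.fst i (aeval (cliqueSubst e) u) ≤ d :=
  (domDegWith_aeval_le (cliqueSubst_mem_supported e) i u).trans
    ((domDegWith_le_domDeg_mul hh hc).trans hd)

theorem aeval_mul_X_sub_one_mem_sosCertified {u : MvPolynomial (CliqueVar k n N) ℝ} {i : Fin k}
    (hd : domDeg cliqueIdx (u * (X (Sum.inr (i, 0)) - 1)) ≤ d) :
    aeval (cliqueSubst e) (u * (X (Sum.inr (i, 0)) - 1)) ∈ 𝓑 := by
  have hwith := domDegWith_aeval_le_of_domDeg_mul_le e
    (sub_mem (X_mem_supported.mpr rfl) (one_mem _))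
    ⟨Finsupp.single (Sum.inr (i, 0)) 1, by
      simp [coeff_X, coeff_one, eq_comm (a := (0 : CliqueVar k n N →₀ ℕ))], by simp⟩ hd
  have hblock :
      ∑ w : Fin (n i), X (⟨i, w⟩ : Vtx k n) - 1 ∈ supported ℝ (Sigma.fst ⁻¹' {i}) :=
    sub_mem (sum_mem fun w _ => X_mem_supported.mpr rfl) (one_mem _)
  have hcert :
      aeval (cliqueSubst e) u * tailProd e i 0 * (∑ w : Fin (n i), X ⟨i, w⟩ - 1) ∈ 𝓑 :=
    mul_mem_sosCertified_of_mem_eqs ⟨i, rfl⟩ <| by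
      rw [mul_assoc]
      exact (domDeg_mul_le_domDegWith
        (mul_mem (tailProd_mem_supported e i 0) hblock)).trans hwith
  refine mem_sosCertified_of_sub_mem hcert ?_
  have hvanish :
      tailProd e i 0 * ∑ w : Fin (n i), X (⟨i, w⟩ : Vtx k n) ∈ multilinIdeal _ := by
    rw [Finset.mul_sum]
    exact sum_mem fun w _ => tailProd_zero_mul_X_mem e rfl
  convert Ideal.mul_mem_left _ (-aeval (cliqueSubst e) u) hvanish using 1
  simp only [map_mul, map_sub, map_one, aeval_X, cliqueSubst, Fin.val_zero]
  ring

theorem aeval_mul_transition_mem_sosCertified {u : MvPolynomial (CliqueVar k n N) ℝ}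
    (hu : IsSumSq (aeval (cliqueSubst e) u)) {i : Fin k} {j : Fin N}
    (hd : domDeg cliqueIdx (u * ((1 - X (Sum.inr (i, j.castSucc)) + X (Sum.inl (i, e j))
      + X (Sum.inr (i, j.succ))) - 1)) ≤ d) :
    aeval (cliqueSubst e) (u * ((1 - X (Sum.inr (i, j.castSucc)) + X (Sum.inl (i, e j))
      + X (Sum.inr (i, j.succ))) - 1)) ∈ 𝓑 := by
  have himage : aeval (cliqueSubst e) ((1 - X (Sum.inr (i, j.castSucc)) + X (Sum.inl (i, e j))
      + X (Sum.inr (i, j.succ))) - 1 : MvPolynomial (CliqueVar k n N) ℝ) =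
      cliqueSubst e (Sum.inl (i, e j)) * cliqueSubst e (Sum.inr (i, j.succ)) := by
    simp only [map_sub, map_add, map_one, aeval_X, cliqueSubst, Fin.val_castSucc, Fin.val_succ,
      tailProd_eq_mul_succ e i j]
    ring
  have hX :
      ∀ s : CliqueVar k n N, cliqueIdx s = i → X s ∈ supported ℝ (cliqueIdx ⁻¹' {i}) :=
    fun s hs => X_mem_supported.mpr hs
  have hwith := domDegWith_aeval_le_of_domDeg_mul_le e
    (sub_mem (add_mem (add_mem (sub_mem (one_mem _) (hX _ rfl)) (hX _ rfl)) (hX _ rfl))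
      (one_mem _))
    ⟨Finsupp.single (Sum.inl (i, e j)) 1, by
      simp [coeff_X, coeff_one, Finsupp.single_left_inj,
        eq_comm (a := (0 : CliqueVar k n N →₀ ℕ))], by simp⟩ hd
  rw [map_mul, himage]
  exact mul_mem_sosCertified_of_isIdempotentElem hu
    (mul_mem (cliqueSubst_mem_supported e (Sum.inl (i, e j)))
      (cliqueSubst_mem_supported e (Sum.inr (i, j.succ))))
    (by rw [map_mul]
        exact (isIdempotentElem_mk_cliqueSubst e _).mul (isIdempotentElem_mk_cliqueSubst e _))
    hwith

theorem aeval_mul_mem_sosCertified_of_mem_cliqueIneqs {u h : MvPolynomial (CliqueVar k n N) ℝ}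
    (hh : h ∈ cliqueIneqs k n N G e) (hu : IsSOS u) (hd : domDeg cliqueIdx (u * h) ≤ d) :
    aeval (cliqueSubst e) (u * h) ∈ 𝓑 := by
  have hφu : IsSumSq (aeval (cliqueSubst e) u) := (isSOS_iff_isSumSq.mp hu).map _
  have hφd := (domDeg_aeval_le (cliqueSubst_mem_supported e) (u * h)).trans hd
  rcases hh with ((((⟨i, i', a, b, hii', hab, rfl⟩ | ⟨i, a, b, hab, rfl⟩) | ⟨i, rfl⟩) |
    ⟨i, j, rfl⟩) | ⟨i, rfl⟩)
  · simp only [map_mul, map_sub, map_one, aeval_X, cliqueSubst] at hφd ⊢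
    refine mul_one_sub_vertexSubst_sub_mem_sosCertified hφu hφd fun ha hb hd' => ?_
    exact mul_mem_sosCertified_of_mem_ineqs ⟨a, b, ha ▸ hb ▸ hii', hab, rfl⟩ hφu hd'
  · simp only [map_mul, map_sub, map_one, aeval_X, cliqueSubst] at hφd ⊢
    refine mul_one_sub_vertexSubst_sub_mem_sosCertified hφu hφd fun ha hb hd' => ?_
    obtain ⟨i₁, a⟩ := a
    obtain ⟨i₂, b⟩ := b
    dsimp only at ha hb
    subst ha hb
    have hne : a ≠ b := fun h => hab (h ▸ rfl)
    exact mul_one_sub_X_sub_X_mem_sosCertified hφu hne hd'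
  · exact aeval_mul_X_sub_one_mem_sosCertified e hd
  · exact aeval_mul_transition_mem_sosCertified e hφu hd
  · have himage : aeval (cliqueSubst e)
        (1 - X (Sum.inr (i, Fin.last N)) - 1 : MvPolynomial (CliqueVar k n N) ℝ) = 0 := by
      simp [cliqueSubst, tailProd_of_le e i le_rfl]
    rw [map_mul, himage, mul_zero]
    exact zero_mem _

end Clauses

theorem clique_to_block_domdeg_general (k : ℕ) (n : Fin k → ℕ) (G : SimpleGraph (Vtx k n))
    (N : ℕ) (e : Fin N ≃ Vtx k n) (d : ℕ)
    (h : HasSOSRefutationDomDeg cliqueIdx (∅ : Set (MvPolynomial (CliqueVar k n N) ℝ))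
          (cliqueIneqs k n N G e) d) :
    HasSOSRefutationDomDeg (Sigma.fst : Vtx k n → Fin k) (blockEqs k n)
      (blockIneqs k n G) d := by
  refine h.map (aeval (cliqueSubst e))
    (multilinIdeal_le_comap_aeval (isIdempotentElem_mk_cliqueSubst e))
    (fun f hf => absurd hf (Set.notMem_empty f))
    (fun _ hh _ hu hd => aeval_mul_mem_sosCertified_of_mem_cliqueIneqs e hh hu hd) ?_
  intro u hu hd
  exact mem_sosCertified_of_isSumSq ((isSOS_iff_isSumSq.mp hu).map _)
    ((domDeg_aeval_le (cliqueSubst_mem_supported e) u).trans hd)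

/-- If `Clique_k(G)` (for a `k`-partite graph `G`) has a sums-of-squares refutation of
domain-degree `d`, then `Block_k(G)` has a sums-of-squares refutation of domain-degree
`d`. -/
theorem clique_to_block_domdeg (k : ℕ) (n : Fin k → ℕ) (G : SimpleGraph (Vtx k n))
    (hpart : ∀ u v : Vtx k n, G.Adj u v → u.1 ≠ v.1)
    (N : ℕ) (e : Fin N ≃ Vtx k n) (d : ℕ)
    (h : HasSOSRefutationDomDeg cliqueIdx (∅ : Set (MvPolynomial (CliqueVar k n N) ℝ))
          (cliqueIneqs k n N G e) d) :
    HasSOSRefutationDomDeg (Sigma.fst : Vtx k n → Fin k) (blockEqs k n)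
      (blockIneqs k n G) d :=
  clique_to_block_domdeg_general k n G N e d h
end

section
/- Every satisfying assignment of the threshold formula THR_k(s) sets at least k of the selector variables s_1,...,s_m to true. -/
/-!
Each block `b` of the `y`-chain is a 3-CNF encoding of `⋁ᵢ p_{b,i}`: if no `p_{b,i}` held,
the chain clauses would propagate `y_{b,0} = true` up to `y_{b,m}`, contradicting `¬y_{b,m}`.
Choosing for each `b` such an `i` gives a map `[k] → [m]`, injective by the clauses
`¬p_{b,i} ∨ ¬p_{b',i}` and landing in the true selectors by `¬p_{b,i} ∨ s_i`.
-/

theorem Fin.exists_eq_true_of_chain {m : ℕ} (q : Fin m → Bool) (y : Fin (m + 1) → Bool)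
    (h0 : y 0 = true) (hstep : ∀ i : Fin m, y i.castSucc = false ∨ q i = true ∨ y i.succ = true)
    (hlast : y (Fin.last m) = false) : ∃ i, q i = true := by
  by_contra! hq
  have hall : ∀ j, y j = true := by
    intro j
    induction j using Fin.induction with
    | zero => exact h0
    | succ i ih => simpa [ih, hq i] using hstep i
  simp [hall] at hlast

/-- Every satisfying assignment of the threshold formula `THR_k(s)` — with selector
variables `s_i`, mapping variables `p_{b,i}`, and extension variables `y_{b,j}` — sets
at least `k` of the selector variables to true. -/
theorem thr_forces_k_selectors (k m : ℕ) (s : Fin m → Bool)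
    (p : Fin k → Fin m → Bool) (y : Fin k → Fin (m + 1) → Bool)
    (hy0 : ∀ b : Fin k, y b 0 = true)
    (hchain : ∀ (b : Fin k) (i : Fin m),
      y b i.castSucc = false ∨ p b i = true ∨ y b i.succ = true)
    (hym : ∀ b : Fin k, y b (Fin.last m) = false)
    (hinj : ∀ (b b' : Fin k) (i : Fin m), b ≠ b' → (p b i = false ∨ p b' i = false))
    (hsel : ∀ (b : Fin k) (i : Fin m), p b i = false ∨ s i = true) :
    k ≤ (Finset.univ.filter fun i : Fin m => s i = true).card := by
  choose f hf using fun b => Fin.exists_eq_true_of_chain (p b) (y b) (hy0 b) (hchain b) (hym b)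
  have hf_inj : Function.Injective f := by
    intro b b' hbb'
    by_contra hne
    have h := hinj b b' (f b) hne
    rw [hf b, hbb', hf b'] at h
    simp at h
  have hf_sel : ∀ b, s (f b) = true := fun b => by simpa [hf] using hsel b (f b)
  simpa using Finset.card_le_card_of_injOn (s := Finset.univ)
    (t := Finset.univ.filter fun i => s i = true) f (fun b _ => by simpa using hf_sel b)
    hf_inj.injOn
end
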